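/- Let m ≥ 1 be an integer, η > 0, μ > 0, t > 0, p ∈ ℝ³, and let a ∈ ℝ³ be a constant vector. Define the vector field V(x) = (1/(4πμ)) (∫_{B_η(p)} (e^{−t|x−y|}/|x−y|) (η² − |y−p|²)^m dy) · a on ℝ³. Then for every x with |x − p| > η, the curl of V at x equals (η^{2(1+m)}/μ) · a_m(t) · ∇(e^{−t|x−p|}/|x−p|) × a. -/

import Mathlib

open MeasureTheory

noncomputable section

/-- The partial derivative in the `i`-th coordinate direction. -/
def pd (i : Fin 3) (f : EuclideanSpace ℝ (Fin 3) → ℝ) (x : EuclideanSpace ℝ (Fin 3)) : ℝ :=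
  fderiv ℝ f x (EuclideanSpace.single i 1)

/-- The curl of a vector field on `ℝ³`. -/
def curl (F : EuclideanSpace ℝ (Fin 3) → EuclideanSpace ℝ (Fin 3))
    (x : EuclideanSpace ℝ (Fin 3)) : EuclideanSpace ℝ (Fin 3) :=
  (WithLp.equiv 2 (Fin 3 → ℝ)).symm
    ![pd 1 (fun y => F y 2) x - pd 2 (fun y => F y 1) x,
      pd 2 (fun y => F y 0) x - pd 0 (fun y => F y 2) x,
      pd 0 (fun y => F y 1) x - pd 1 (fun y => F y 0) x]

/-- The cross product on `ℝ³`. -/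
def cross (u v : EuclideanSpace ℝ (Fin 3)) : EuclideanSpace ℝ (Fin 3) :=
  (WithLp.equiv 2 (Fin 3 → ℝ)).symm
    ![u 1 * v 2 - u 2 * v 1, u 2 * v 0 - u 0 * v 2, u 0 * v 1 - u 1 * v 0]

/-- `a_m(t) = (1/t) ∫₀¹ s (1 − s²)^m sinh(η t s) ds`. -/
def aCoef (m : ℕ) (η t : ℝ) : ℝ :=
  (1 / t) * ∫ s in (0:ℝ)..1, s * (1 - s ^ 2) ^ m * Real.sinh (η * t * s)

/-!
Outside the ball `B_η(p)` the integral defining `V` is a function of `d = ‖x - p‖` alone. After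
rotating `x - p` onto the first axis, cylindrical coordinates around that axis and the
substitution `u = ‖x - y‖` turn it into `2π` times a double integral over `(a, u)`; integrating
first in the axial coordinate `a` leaves `∫_{d-η}^{d+η} e^{-tu} (η² - (u - d)²)^{m+1} du / (2d(m+1))`,
and the substitution `u = d + ηs` followed by an integration by parts identifies this with
`4π η^{2(m+1)} a_m(t) e^{-td} / d`. Thus near `x` the field is `g(z) • c` for the Yukawa potential
`g(z) = e^{-t‖z-p‖}/‖z-p‖` and a constant vector `c`, and `curl (g c) = ∇g × c`.
-/

open Set Real MeasureTheory

local notation "ℝ³" => EuclideanSpace ℝ (Fin 3)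

theorem integral_mul_one_sub_sq_pow_mul_sinh (m : ℕ) (τ : ℝ) :
    ∫ s in (0:ℝ)..1, s * (1 - s ^ 2) ^ m * sinh (τ * s)
      = τ / (2 * (m + 1)) * ∫ s in (0:ℝ)..1, (1 - s ^ 2) ^ (m + 1) * cosh (τ * s) := by
  have hderiv : ∀ s : ℝ,
      HasDerivAt (fun s => -((1 - s ^ 2) ^ (m + 1) * sinh (τ * s)) / (2 * (m + 1)))
      (s * (1 - s ^ 2) ^ m * sinh (τ * s)
        - τ / (2 * (m + 1)) * ((1 - s ^ 2) ^ (m + 1) * cosh (τ * s))) s := by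
    intro s
    have hpow : HasDerivAt (fun s : ℝ => (1 - s ^ 2) ^ (m + 1))
        ((m + 1 : ℕ) * (1 - s ^ 2) ^ m * (-(2 * s))) s := by
      simpa using ((hasDerivAt_pow 2 s).const_sub 1).fun_pow (m + 1)
    have hsinh : HasDerivAt (fun s => sinh (τ * s)) (cosh (τ * s) * τ) s :=
      (hasDerivAt_sinh _).comp s (((hasDerivAt_id s).const_mul τ).congr_deriv (mul_one τ))
    refine ((hpow.fun_mul hsinh).neg.div_const (2 * (m + 1))).congr_deriv ?_
    push_cast
    field_simp
    ring
  have hftc := intervalIntegral.integral_eq_sub_of_hasDerivAt (a := 0) (b := 1)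
    (fun s _ => hderiv s) (by apply Continuous.intervalIntegrable; fun_prop)
  rw [intervalIntegral.integral_sub (by apply Continuous.intervalIntegrable; fun_prop)
    (by apply Continuous.intervalIntegrable; fun_prop), intervalIntegral.integral_const_mul] at hftc
  norm_num at hftc
  linarith

theorem integral_exp_neg_mul_one_sub_sq_pow (n : ℕ) (τ : ℝ) :
    ∫ s in (-1:ℝ)..1, exp (-(τ * s)) * (1 - s ^ 2) ^ n
      = 2 * ∫ s in (0:ℝ)..1, (1 - s ^ 2) ^ n * cosh (τ * s) := by
  have hint : ∀ f : ℝ → ℝ, Continuous f → ∀ a b : ℝ, IntervalIntegrable f volume a b :=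
    fun f hf a b => hf.intervalIntegrable a b
  have hneg : ∫ s in (-1:ℝ)..0, exp (-(τ * s)) * (1 - s ^ 2) ^ n
      = ∫ s in (0:ℝ)..1, exp (τ * s) * (1 - s ^ 2) ^ n := by
    have h := intervalIntegral.integral_comp_neg (a := 0) (b := 1)
      (fun s => exp (-(τ * s)) * (1 - s ^ 2) ^ n)
    simp only [mul_neg, neg_neg, neg_sq, neg_zero] at h
    exact h.symm
  rw [← intervalIntegral.integral_add_adjacent_intervals (b := 0) (hint _ (by fun_prop) _ _)
      (hint _ (by fun_prop) _ _), hneg, ← intervalIntegral.integral_add (hint _ (by fun_prop) _ _)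
      (hint _ (by fun_prop) _ _), ← intervalIntegral.integral_const_mul]
  refine intervalIntegral.integral_congr fun s _ => ?_
  simp only [cosh_eq]
  ring

theorem aCoef_eq_integral_cosh (m : ℕ) (η : ℝ) {t : ℝ} (ht : t ≠ 0) :
    aCoef m η t
      = η / (2 * (m + 1)) * ∫ s in (0:ℝ)..1, (1 - s ^ 2) ^ (m + 1) * cosh (η * t * s) := by
  rw [aCoef, integral_mul_one_sub_sq_pow_mul_sinh]
  field_simp

theorem integral_sub_mul_pow (n : ℕ) (A : ℝ) {c : ℝ} (hc : c ≠ 0) (a b : ℝ) :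
    ∫ x in a..b, (A - c * x) ^ n
      = ((A - c * a) ^ (n + 1) - (A - c * b) ^ (n + 1)) / (c * (n + 1)) := by
  rw [intervalIntegral.integral_comp_sub_mul (fun x => x ^ n) hc, integral_pow, smul_eq_mul]
  field_simp

theorem integral_exp_neg_mul_sq_sub_sq_pow (n : ℕ) (t d η : ℝ) :
    ∫ u in (d - η)..(d + η), exp (-t * u) * (η ^ 2 - (u - d) ^ 2) ^ n
      = η ^ (2 * n + 1) * exp (-t * d)
          * ∫ s in (-1:ℝ)..1, exp (-(η * t * s)) * (1 - s ^ 2) ^ n := by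
  have hsub := intervalIntegral.mul_integral_comp_mul_add (a := -1) (b := 1) (c := η) (d := d)
    (f := fun u => exp (-t * u) * (η ^ 2 - (u - d) ^ 2) ^ n)
  rw [show η * -1 + d = d - η by ring, show η * 1 + d = d + η by ring] at hsub
  rw [← hsub, ← intervalIntegral.integral_const_mul, ← intervalIntegral.integral_const_mul]
  refine intervalIntegral.integral_congr fun s _ => ?_
  rw [show -t * (η * s + d) = -t * d + -(η * t * s) by ring, exp_add,
    show η ^ 2 - (η * s + d - d) ^ 2 = η ^ 2 * (1 - s ^ 2) by ring, mul_pow, ← pow_mul]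
  ring

theorem integral_exp_neg_mul_sq_sub_sq_pow_succ_eq_aCoef (m : ℕ) {t : ℝ} (ht : t ≠ 0) (η d : ℝ) :
    ∫ u in (d - η)..(d + η), exp (-t * u) * (η ^ 2 - (u - d) ^ 2) ^ (m + 1)
      = 4 * (m + 1) * η ^ (2 * (1 + m)) * aCoef m η t * exp (-t * d) := by
  rw [integral_exp_neg_mul_sq_sub_sq_pow, integral_exp_neg_mul_one_sub_sq_pow,
    aCoef_eq_integral_cosh m η ht]
  generalize ∫ s in (0:ℝ)..1, (1 - s ^ 2) ^ (m + 1) * cosh (η * t * s) = I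
  field_simp
  ring

theorem integral_indicator_Ioo {a b : ℝ} (hab : a ≤ b) (f : ℝ → ℝ) :
    ∫ x, (Ioo a b).indicator f x = ∫ x in a..b, f x := by
  rw [integral_indicator measurableSet_Ioo, ← integral_Ioc_eq_integral_Ioo,
    intervalIntegral.integral_of_le hab]

theorem integral_indicator_mem_and_mem_Ioo {A : Set ℝ} {φ ψ : ℝ → ℝ}
    (hφψ : ∀ a ∈ A, φ a ≤ ψ a) (g : ℝ → ℝ → ℝ) (a : ℝ) :
    ∫ u, {u | a ∈ A ∧ u ∈ Ioo (φ a) (ψ a)}.indicator (g a) u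
      = A.indicator (fun a => ∫ u in φ a..ψ a, g a u) a := by
  by_cases ha : a ∈ A
  · simp only [ha, true_and, ofPred_mem_eq, indicator_of_mem,
      integral_indicator_Ioo (hφψ a ha)]
  · simp [ha]

theorem integral_integral_swap_of_mem_iff {f : ℝ → ℝ → ℝ} {α β γ δ : ℝ} {φ ψ φ' ψ' : ℝ → ℝ}
    (hαβ : α ≤ β) (hγδ : γ ≤ δ) (hφψ : ∀ a ∈ Ioo α β, φ a ≤ ψ a)
    (hφψ' : ∀ u ∈ Ioo γ δ, φ' u ≤ ψ' u) (hφ : Measurable φ) (hψ : Measurable ψ)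
    (hregion : ∀ a u,
      (a ∈ Ioo α β ∧ u ∈ Ioo (φ a) (ψ a)) ↔ (u ∈ Ioo γ δ ∧ a ∈ Ioo (φ' u) (ψ' u)))
    (hf : IntegrableOn (Function.uncurry f) {q | q.1 ∈ Ioo α β ∧ q.2 ∈ Ioo (φ q.1) (ψ q.1)}) :
    ∫ a in α..β, ∫ u in φ a..ψ a, f a u = ∫ u in γ..δ, ∫ a in φ' u..ψ' u, f a u := by
  set S : Set (ℝ × ℝ) := {q | q.1 ∈ Ioo α β ∧ q.2 ∈ Ioo (φ q.1) (ψ q.1)}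
  have hS : MeasurableSet S :=
    (measurableSet_Ioo.preimage measurable_fst).inter
      ((measurableSet_lt (hφ.comp measurable_fst) measurable_snd).inter
        (measurableSet_lt measurable_snd (hψ.comp measurable_fst)))
  have hslice (a u : ℝ) :
      S.indicator (Function.uncurry f) (a, u)
        = {u | a ∈ Ioo α β ∧ u ∈ Ioo (φ a) (ψ a)}.indicator (f a) u := by
    simp only [S, indicator_apply, mem_ofPred_eq, Function.uncurry_apply_pair]
  have hslice' (a u : ℝ) :
      S.indicator (Function.uncurry f) (a, u)
        = {a | u ∈ Ioo γ δ ∧ a ∈ Ioo (φ' u) (ψ' u)}.indicator (fun a => f a u) a := by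
    simp only [S, indicator_apply, mem_ofPred_eq, Function.uncurry_apply_pair, hregion]
  calc ∫ a in α..β, ∫ u in φ a..ψ a, f a u
      = ∫ a, ∫ u, S.indicator (Function.uncurry f) (a, u) := by
        simp only [hslice, integral_indicator_mem_and_mem_Ioo hφψ, integral_indicator_Ioo hαβ]
    _ = ∫ u, ∫ a, S.indicator (Function.uncurry f) (a, u) :=
        integral_integral_swap ((integrable_indicator_iff hS).mpr hf)
    _ = ∫ u in γ..δ, ∫ a in φ' u..ψ' u, f a u := by
        simp only [hslice', integral_indicator_mem_and_mem_Ioo (g := fun u a => f a u) hφψ',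
          integral_indicator_Ioo hγδ]

theorem mem_Ioo_and_mem_Ioo_sqrt_iff {d η a u : ℝ} (hη : 0 < η) (hd : η < d) :
    (a ∈ Ioo (-η) η ∧ u ∈ Ioo (d - a) √(d ^ 2 + η ^ 2 - 2 * d * a))
      ↔ (u ∈ Ioo (d - η) (d + η) ∧ a ∈ Ioo (d - u) ((d ^ 2 + η ^ 2 - u ^ 2) / (2 * d))) := by
  have hd0 : 0 < 2 * d := by linarith
  simp only [mem_Ioo, lt_div_iff₀ hd0]
  constructor
  · rintro ⟨⟨h1, h2⟩, h3, h4⟩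
    have h4' := (Real.lt_sqrt (by linarith)).mp h4
    exact ⟨⟨by nlinarith, by nlinarith⟩, by linarith, by nlinarith⟩
  · rintro ⟨⟨h1, h2⟩, h3, h4⟩
    exact ⟨⟨by nlinarith, by nlinarith⟩, by linarith,
      (Real.lt_sqrt (by linarith)).mpr (by nlinarith)⟩

theorem integral_integral_exp_neg_mul_sub_sq_pow {d η : ℝ} (m : ℕ) (t : ℝ) (hη : 0 < η)
    (hd : η < d) :
    ∫ a in (-η)..η, ∫ u in (d - a)..√(d ^ 2 + η ^ 2 - 2 * d * a),
        exp (-t * u) * (d ^ 2 + η ^ 2 - 2 * d * a - u ^ 2) ^ m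
      = (∫ u in (d - η)..(d + η), exp (-t * u) * (η ^ 2 - (u - d) ^ 2) ^ (m + 1))
          / (2 * d * (m + 1)) := by
  have hd0 : 0 < d := hη.trans hd
  have hcont : Continuous fun q : ℝ × ℝ =>
      exp (-t * q.2) * (d ^ 2 + η ^ 2 - 2 * d * q.1 - q.2 ^ 2) ^ m := by
    fun_prop
  rw [integral_integral_swap_of_mem_iff (φ' := fun u => d - u)
    (ψ' := fun u => (d ^ 2 + η ^ 2 - u ^ 2) / (2 * d)) (γ := d - η) (δ := d + η)
    (by linarith) (by linarith) ?_ ?_ (by fun_prop) (by fun_prop)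
    (fun a u => mem_Ioo_and_mem_Ioo_sqrt_iff hη hd) ?_,
    ← intervalIntegral.integral_div]
  · refine intervalIntegral.integral_congr fun u _ => ?_
    simp_rw [show ∀ a, d ^ 2 + η ^ 2 - 2 * d * a - u ^ 2 = (d ^ 2 + η ^ 2 - u ^ 2) - 2 * d * a
      from fun a => by ring]
    rw [intervalIntegral.integral_const_mul, integral_sub_mul_pow m _ (by positivity),
      show d ^ 2 + η ^ 2 - u ^ 2 - 2 * d * (d - u) = η ^ 2 - (u - d) ^ 2 by ring,
      mul_div_cancel₀ _ (by positivity : 2 * d ≠ 0), sub_self, zero_pow (Nat.succ_ne_zero m),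
      sub_zero, mul_div_assoc]
  · intro a ⟨ha1, ha2⟩
    exact (Real.le_sqrt (by linarith) (by nlinarith)).mpr (by nlinarith)
  · intro u ⟨hu1, hu2⟩
    rw [le_div_iff₀ (by positivity)]
    nlinarith
  · refine (hcont.continuousOn.integrableOn_compact ((isCompact_Icc (a := -η) (b := η)).prod
      (isCompact_Icc (a := d - η) (b := d + η)))).mono_set ?_
    rintro ⟨a, u⟩ ⟨ha, hu⟩
    have hlens := (mem_Ioo_and_mem_Ioo_sqrt_iff hη hd).mp ⟨ha, hu⟩
    exact ⟨Ioo_subset_Icc_self ha, Ioo_subset_Icc_self hlens.1⟩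

theorem integral_div_sqrt_sq_add_sq_mul_comp {b c : ℝ} (hb : 0 < b) (hc : 0 ≤ c) {g : ℝ → ℝ}
    (hg : Continuous g) :
    ∫ r in (0:ℝ)..√c, r / √(b ^ 2 + r ^ 2) * g √(b ^ 2 + r ^ 2) = ∫ u in b..√(b ^ 2 + c), g u := by
  have hpos (r : ℝ) : 0 < b ^ 2 + r ^ 2 := by positivity
  have hderiv (r : ℝ) : HasDerivAt (fun r => √(b ^ 2 + r ^ 2)) (r / √(b ^ 2 + r ^ 2)) r := by
    convert ((hasDerivAt_pow 2 r).const_add (b ^ 2)).sqrt (hpos r).ne' using 1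
    field_simp
    push_cast
    ring
  have hcont : ContinuousOn (fun r => r / √(b ^ 2 + r ^ 2)) (uIcc 0 √c) :=
    (continuous_id.div (by fun_prop) fun r => (sqrt_pos.mpr (hpos r)).ne').continuousOn
  have hsub := intervalIntegral.integral_comp_mul_deriv (fun r _ => hderiv r) hcont hg
  simp only [Function.comp_def, zero_pow two_ne_zero, add_zero, sqrt_sq hb.le,
    sq_sqrt hc] at hsub
  rw [← hsub]
  exact intervalIntegral.integral_congr fun r _ => mul_comm _ _

theorem setIntegral_Ioi_mul_ite_eq_indicator (m : ℕ) (t : ℝ) {η d : ℝ} (hη : 0 < η) (hd : η < d)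
    (a : ℝ) :
    ∫ r in Ioi 0, r * (if a ^ 2 + r ^ 2 < η ^ 2 then
        exp (-t * √((d - a) ^ 2 + r ^ 2)) / √((d - a) ^ 2 + r ^ 2) * (η ^ 2 - (a ^ 2 + r ^ 2)) ^ m
      else 0)
      = (Ioo (-η) η).indicator (fun a => ∫ u in (d - a)..√(d ^ 2 + η ^ 2 - 2 * d * a),
          exp (-t * u) * (d ^ 2 + η ^ 2 - 2 * d * a - u ^ 2) ^ m) a := by
  by_cases ha : a ∈ Ioo (-η) η
  · obtain ⟨ha1, ha2⟩ := ha
    have hc : 0 ≤ η ^ 2 - a ^ 2 := by nlinarith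
    have hsub := integral_div_sqrt_sq_add_sq_mul_comp (b := d - a) (by linarith) hc
      (g := fun u => exp (-t * u) * (d ^ 2 + η ^ 2 - 2 * d * a - u ^ 2) ^ m) (by fun_prop)
    beta_reduce at hsub
    rw [setIntegral_congr_fun measurableSet_Ioi (g := (Ioo 0 √(η ^ 2 - a ^ 2)).indicator
        fun r => r / √((d - a) ^ 2 + r ^ 2) * (exp (-t * √((d - a) ^ 2 + r ^ 2))
          * (d ^ 2 + η ^ 2 - 2 * d * a - √((d - a) ^ 2 + r ^ 2) ^ 2) ^ m)) ?_,
      setIntegral_indicator measurableSet_Ioo, inter_eq_self_of_subset_right Ioo_subset_Ioi_self,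
      ← integral_Ioc_eq_integral_Ioo, ← intervalIntegral.integral_of_le (sqrt_nonneg _), hsub,
      indicator_of_mem (show a ∈ Ioo (-η) η from ⟨ha1, ha2⟩)]
    · congr 2
      ring
    intro r hr
    beta_reduce
    have hr_lt : r < √(η ^ 2 - a ^ 2) ↔ a ^ 2 + r ^ 2 < η ^ 2 := by
      rw [lt_sqrt (le_of_lt hr)]
      constructor <;> intro h <;> linarith
    by_cases hcond : a ^ 2 + r ^ 2 < η ^ 2
    · rw [if_pos hcond, indicator_of_mem (show r ∈ Ioo 0 _ from ⟨hr, hr_lt.mpr hcond⟩),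
        sq_sqrt (by positivity)]
      ring_nf
    · rw [if_neg hcond, indicator_of_notMem fun h => hcond (hr_lt.mp h.2), mul_zero]
  · rw [indicator_of_notMem ha]
    refine setIntegral_eq_zero_of_forall_eq_zero fun r hr => ?_
    rw [if_neg, mul_zero]
    intro h
    exact ha ⟨by nlinarith [mem_Ioi.mp hr], by nlinarith [mem_Ioi.mp hr]⟩

theorem integral_comp_sq_add_sq (G : ℝ → ℝ) :
    ∫ p : ℝ × ℝ, G (p.1 ^ 2 + p.2 ^ 2) = 2 * π * ∫ r in Ioi 0, r * G (r ^ 2) := by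
  rw [← integral_comp_polarCoord_symm, polarCoord_target, Measure.volume_eq_prod]
  have hpolar (p : ℝ × ℝ) : p.1 • G ((polarCoord.symm p).1 ^ 2 + (polarCoord.symm p).2 ^ 2)
      = p.1 * G (p.1 ^ 2) * 1 := by
    simp only [polarCoord_symm_apply, smul_eq_mul, mul_one, mul_pow, ← mul_add, cos_sq_add_sin_sq]
  simp only [hpolar]
  rw [setIntegral_prod_mul (fun r => r * G (r ^ 2)) (fun _ => (1 : ℝ)), setIntegral_const,
    Real.volume_real_Ioo_of_le (by linarith [pi_pos]), smul_eq_mul, mul_one]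
  ring

def coordEquiv : ℝ × ℝ × ℝ ≃ᵐ ℝ³ :=
  (MeasurableEquiv.prodCongr (MeasurableEquiv.refl ℝ) MeasurableEquiv.finTwoArrow.symm).trans
    ((MeasurableEquiv.piFinSuccAbove (fun _ : Fin 3 => ℝ) 0).symm.trans
      (MeasurableEquiv.toLp 2 (Fin 3 → ℝ)))

theorem coordEquiv_measurePreserving : MeasurePreserving coordEquiv := by
  refine ((EuclideanSpace.volume_preserving_symm_measurableEquiv_toLp (Fin 3)).symm _).comp
    (((volume_preserving_piFinSuccAbove (fun _ : Fin 3 => ℝ) 0).symm _).comp ?_)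
  exact (MeasurePreserving.id volume).prod ((volume_preserving_finTwoArrow ℝ).symm _)

@[simp]
theorem coordEquiv_apply_zero (q : ℝ × ℝ × ℝ) : coordEquiv q 0 = q.1 := by
  rfl

@[simp]
theorem coordEquiv_apply_one (q : ℝ × ℝ × ℝ) : coordEquiv q 1 = q.2.1 := by
  rfl

@[simp]
theorem coordEquiv_apply_two (q : ℝ × ℝ × ℝ) : coordEquiv q 2 = q.2.2 := by
  rfl

theorem integral_comp_coord_zero_sq_add_sq (H : ℝ → ℝ → ℝ)
    (hH : Integrable fun y : ℝ³ => H (y 0) (y 1 ^ 2 + y 2 ^ 2)) :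
    ∫ y : ℝ³, H (y 0) (y 1 ^ 2 + y 2 ^ 2) = 2 * π * ∫ a, ∫ r in Ioi 0, r * H a (r ^ 2) := by
  have hH' := (coordEquiv_measurePreserving.integrable_comp_emb
    coordEquiv.measurableEmbedding).mpr hH
  simp only [Function.comp_def, coordEquiv_apply_zero, coordEquiv_apply_one,
    coordEquiv_apply_two] at hH'
  rw [← coordEquiv_measurePreserving.integral_comp coordEquiv.measurableEmbedding,
    ← integral_const_mul]
  simp only [coordEquiv_apply_zero, coordEquiv_apply_one, coordEquiv_apply_two]
  rw [Measure.volume_eq_prod, integral_prod _ hH']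
  simp only [integral_comp_sq_add_sq]

theorem setIntegral_ball_eq_setIntegral_ball_zero {E : Type*} [NormedAddCommGroup E]
    [MeasurableSpace E] [BorelSpace E] {μ : Measure E} [μ.IsAddRightInvariant]
    (f : E → ℝ) (p : E) (r : ℝ) :
    ∫ y in Metric.ball p r, f y ∂μ = ∫ y in Metric.ball 0 r, f (y + p) ∂μ := by
  have hpre : (· + p) ⁻¹' Metric.ball p r = Metric.ball 0 r := by
    ext y
    simp [dist_eq_norm]
  rw [← (measurePreserving_add_right μ p).setIntegral_preimage_emb
    (measurableEmbedding_addRight p), hpre]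

theorem setIntegral_ball_zero_comp_norm_sub_of_norm_eq {E : Type*} [NormedAddCommGroup E]
    [InnerProductSpace ℝ E] [FiniteDimensional ℝ E] [MeasurableSpace E] [BorelSpace E]
    (F : ℝ → ℝ → ℝ) {v w : E} (h : ‖v‖ = ‖w‖) (r : ℝ) :
    ∫ y in Metric.ball 0 r, F ‖v - y‖ ‖y‖ = ∫ y in Metric.ball 0 r, F ‖w - y‖ ‖y‖ := by
  set R := (ℝ ∙ (v - w))ᗮ.reflection
  have hRv : R v = w := Submodule.reflection_sub h
  have hpre : R ⁻¹' Metric.ball 0 r = Metric.ball 0 r := by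
    ext y
    simp
  conv_rhs => rw [← R.measurePreserving.setIntegral_preimage_emb
    R.toHomeomorph.measurableEmbedding, hpre]
  refine setIntegral_congr_fun measurableSet_ball fun y _ => ?_
  rw [← hRv, ← map_sub, R.norm_map, R.norm_map]

theorem norm_fin_three_eq_sqrt (y : ℝ³) : ‖y‖ = √(y 0 ^ 2 + (y 1 ^ 2 + y 2 ^ 2)) := by
  rw [EuclideanSpace.norm_eq, Fin.sum_univ_three]
  simp only [Real.norm_eq_abs, sq_abs, add_assoc]

theorem integrable_indicator_ball_exp_div_norm_sub {E : Type*} [NormedAddCommGroup E]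
    [NormedSpace ℝ E] [FiniteDimensional ℝ E] [MeasurableSpace E] [BorelSpace E]
    (μ : Measure E) [IsFiniteMeasureOnCompacts μ] (m : ℕ) (t : ℝ) {η : ℝ} {w : E}
    (hw : η < ‖w‖) :
    Integrable ((Metric.ball 0 η).indicator
      fun y => exp (-t * ‖w - y‖) / ‖w - y‖ * (η ^ 2 - ‖y‖ ^ 2) ^ m) μ := by
  have hne : ∀ y ∈ Metric.closedBall (0 : E) η, ‖w - y‖ ≠ 0 := by
    intro y hy
    rw [mem_closedBall_zero_iff] at hy
    linarith [norm_sub_norm_le w y]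
  have hcont : ContinuousOn (fun y => exp (-t * ‖w - y‖) / ‖w - y‖ * (η ^ 2 - ‖y‖ ^ 2) ^ m)
      (Metric.closedBall 0 η) :=
    ((by fun_prop : Continuous fun y : E => exp (-t * ‖w - y‖)).continuousOn.div
      (by fun_prop) hne).mul (by fun_prop)
  exact (integrable_indicator_iff measurableSet_ball).mpr
    ((hcont.integrableOn_compact (isCompact_closedBall 0 η)).mono_set
      Metric.ball_subset_closedBall)

theorem indicator_ball_exp_div_norm_single_sub (m : ℕ) (t d : ℝ) {η : ℝ} (hη : 0 < η) (y : ℝ³) :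
    (Metric.ball 0 η).indicator (fun y => exp (-t * ‖EuclideanSpace.single 0 d - y‖)
        / ‖EuclideanSpace.single 0 d - y‖ * (η ^ 2 - ‖y‖ ^ 2) ^ m) y
      = if y 0 ^ 2 + (y 1 ^ 2 + y 2 ^ 2) < η ^ 2 then
          exp (-t * √((d - y 0) ^ 2 + (y 1 ^ 2 + y 2 ^ 2))) / √((d - y 0) ^ 2 + (y 1 ^ 2 + y 2 ^ 2))
            * (η ^ 2 - (y 0 ^ 2 + (y 1 ^ 2 + y 2 ^ 2))) ^ m
        else 0 := by
  have hwy : ‖EuclideanSpace.single 0 d - y‖ = √((d - y 0) ^ 2 + (y 1 ^ 2 + y 2 ^ 2)) := by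
    simp [norm_fin_three_eq_sqrt]
  have hy : ‖y‖ < η ↔ y 0 ^ 2 + (y 1 ^ 2 + y 2 ^ 2) < η ^ 2 := by
    rw [← sq_lt_sq₀ (norm_nonneg y) hη.le, norm_fin_three_eq_sqrt, sq_sqrt (by positivity)]
  by_cases hmem : y ∈ Metric.ball 0 η
  · rw [indicator_of_mem hmem, if_pos (hy.mp (mem_ball_zero_iff.mp hmem)), hwy,
      norm_fin_three_eq_sqrt y, sq_sqrt (by positivity)]
  · rw [indicator_of_notMem hmem, if_neg fun h => hmem (mem_ball_zero_iff.mpr (hy.mpr h))]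

-- `u` is the distance from `y` to `v`: for axial coordinate `a` it runs from `‖v‖ - a` (on the
-- axis) to `√(‖v‖² + η² - 2‖v‖a)` (on the sphere).
theorem setIntegral_ball_zero_eq_integral_integral (m : ℕ) (t : ℝ) {η : ℝ} (hη : 0 < η) {v : ℝ³}
    (hv : η < ‖v‖) :
    ∫ y in Metric.ball 0 η, exp (-t * ‖v - y‖) / ‖v - y‖ * (η ^ 2 - ‖y‖ ^ 2) ^ m
      = 2 * π * ∫ a in (-η)..η, ∫ u in (‖v‖ - a)..√(‖v‖ ^ 2 + η ^ 2 - 2 * ‖v‖ * a),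
          exp (-t * u) * (‖v‖ ^ 2 + η ^ 2 - 2 * ‖v‖ * a - u ^ 2) ^ m := by
  set d := ‖v‖
  have hw : ‖v‖ = ‖(EuclideanSpace.single 0 d : ℝ³)‖ := by simp [d]
  have hint := integrable_indicator_ball_exp_div_norm_sub volume m t (hv.trans_eq hw)
  rw [funext (indicator_ball_exp_div_norm_single_sub m t d hη)] at hint
  rw [setIntegral_ball_zero_comp_norm_sub_of_norm_eq
      (fun s r => exp (-t * s) / s * (η ^ 2 - r ^ 2) ^ m) hw,
    ← integral_indicator measurableSet_ball,
    funext (indicator_ball_exp_div_norm_single_sub m t d hη),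
    integral_comp_coord_zero_sq_add_sq (fun a ρ => if a ^ 2 + ρ < η ^ 2 then
      exp (-t * √((d - a) ^ 2 + ρ)) / √((d - a) ^ 2 + ρ) * (η ^ 2 - (a ^ 2 + ρ)) ^ m else 0) hint]
  simp only [setIntegral_Ioi_mul_ite_eq_indicator m t hη hv]
  rw [integral_indicator_Ioo (by linarith)]

theorem setIntegral_ball_exp_div_norm_sub_eq (m : ℕ) {η t : ℝ} (hη : 0 < η) (ht : t ≠ 0)
    {p x : ℝ³} (hx : η < ‖x - p‖) :
    ∫ y in Metric.ball p η, exp (-t * ‖x - y‖) / ‖x - y‖ * (η ^ 2 - ‖y - p‖ ^ 2) ^ m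
      = 4 * π * η ^ (2 * (1 + m)) * aCoef m η t * (exp (-t * ‖x - p‖) / ‖x - p‖) := by
  rw [setIntegral_ball_eq_setIntegral_ball_zero]
  simp only [add_sub_cancel_right, show ∀ y, x - (y + p) = x - p - y from fun y => by abel]
  rw [setIntegral_ball_zero_eq_integral_integral m t hη hx,
    integral_integral_exp_neg_mul_sub_sq_pow m t hη hx,
    integral_exp_neg_mul_sq_sub_sq_pow_succ_eq_aCoef m ht]
  field_simp

theorem differentiableAt_exp_neg_mul_norm_sub_div_norm_sub {E : Type*} [NormedAddCommGroup E]
    [InnerProductSpace ℝ E] (t : ℝ) {p x : E} (hx : x ≠ p) :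
    DifferentiableAt ℝ (fun z => exp (-t * ‖z - p‖) / ‖z - p‖) x := by
  have hnorm : DifferentiableAt ℝ (fun z => ‖z - p‖) x :=
    (differentiableAt_id.sub_const p).norm ℝ (sub_ne_zero.mpr hx)
  simp only [div_eq_mul_inv]
  exact (hnorm.const_mul (-t)).exp.mul (hnorm.inv (norm_ne_zero_iff.mpr (sub_ne_zero.mpr hx)))

theorem gradient_apply_eq_fderiv_single {ι : Type*} [Fintype ι] [DecidableEq ι]
    (f : EuclideanSpace ℝ ι → ℝ) (x : EuclideanSpace ℝ ι) (i : ι) :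
    gradient f x i = fderiv ℝ f x (EuclideanSpace.single i 1) := by
  have hinner : gradient f x i = inner ℝ (EuclideanSpace.single i (1 : ℝ)) (gradient f x) := by
    rw [EuclideanSpace.inner_single_left]
    simp
  rw [hinner, real_inner_comm, gradient, InnerProductSpace.toDual_symm_apply]

theorem cross_smul_right (u v : ℝ³) (c : ℝ) : cross u (c • v) = c • cross u v := by
  ext i
  fin_cases i <;> simp [cross] <;> ring

theorem curl_eq_cross_gradient_of_eventuallyEq {F : ℝ³ → ℝ³} {g : ℝ³ → ℝ} {x : ℝ³} (a : ℝ³)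
    (hg : DifferentiableAt ℝ g x) (hF : F =ᶠ[nhds x] fun z => g z • a) :
    curl F x = cross (gradient g x) a := by
  have hpd (i j : Fin 3) :
      pd i (fun z => F z j) x = fderiv ℝ g x (EuclideanSpace.single i 1) * a j := by
    have hFj : (fun z => F z j) =ᶠ[nhds x] fun z => g z * a j :=
      hF.mono fun z hz => by simp [hz]
    rw [pd, hFj.fderiv_eq, fderiv_mul_const hg, FunLike.coe_smul, Pi.smul_apply, smul_eq_mul,
      mul_comm]
  ext i
  fin_cases i <;> simp [curl, cross, hpd, gradient_apply_eq_fderiv_single]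

theorem stmt_15_general (m : ℕ) (η μ t : ℝ) (hη : 0 < η) (ht : 0 < t)
    (p a : EuclideanSpace ℝ (Fin 3))
    (V : EuclideanSpace ℝ (Fin 3) → EuclideanSpace ℝ (Fin 3))
    (hV : ∀ x, V x =
      ((1 / (4 * Real.pi * μ)) *
        ∫ y in Metric.ball p η,
          Real.exp (-t * ‖x - y‖) / ‖x - y‖ * (η ^ 2 - ‖y - p‖ ^ 2) ^ m) • a)
    (x : EuclideanSpace ℝ (Fin 3)) (hx : η < ‖x - p‖) :
    curl V x = ((η ^ (2 * (1 + m)) / μ) * aCoef m η t) •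
      cross (gradient (fun z => Real.exp (-t * ‖z - p‖) / ‖z - p‖) x) a := by
  have hVg : V =ᶠ[nhds x] fun z =>
      (exp (-t * ‖z - p‖) / ‖z - p‖) • ((η ^ (2 * (1 + m)) / μ * aCoef m η t) • a) := by
    filter_upwards [(isOpen_lt continuous_const
      (by fun_prop : Continuous fun z : ℝ³ => ‖z - p‖)).mem_nhds hx] with z hz
    rw [hV z, setIntegral_ball_exp_div_norm_sub_eq m hη ht.ne' hz, smul_smul]
    congr 1
    field_simp
  have hxp : x ≠ p := fun h => by simp [h] at hx; linarith
  rw [curl_eq_cross_gradient_of_eventuallyEq _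
    (differentiableAt_exp_neg_mul_norm_sub_div_norm_sub t hxp) hVg, cross_smul_right]

theorem stmt_15 (m : ℕ) (hm : 1 ≤ m) (η μ t : ℝ) (hη : 0 < η) (hμ : 0 < μ) (ht : 0 < t)
    (p a : EuclideanSpace ℝ (Fin 3))
    (V : EuclideanSpace ℝ (Fin 3) → EuclideanSpace ℝ (Fin 3))
    (hV : ∀ x, V x =
      ((1 / (4 * Real.pi * μ)) *
        ∫ y in Metric.ball p η,
          Real.exp (-t * ‖x - y‖) / ‖x - y‖ * (η ^ 2 - ‖y - p‖ ^ 2) ^ m) • a)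
    (x : EuclideanSpace ℝ (Fin 3)) (hx : η < ‖x - p‖) :
    curl V x = ((η ^ (2 * (1 + m)) / μ) * aCoef m η t) •
      cross (gradient (fun z => Real.exp (-t * ‖z - p‖) / ‖z - p‖) x) a :=
  stmt_15_general m η μ t hη ht p a V hV x hx
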